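/- Let (V,*) be a magmatic algebra with * extended to T(V), and let Lie(V) ⊆ T(V) denote the free Lie algebra on V (the primitive elements of (T(V),·,Δ_⧢)). Then Lie(V)*T(V) ⊆ Lie(V), and (Lie(V), [−,−], *) is a post-Lie algebra, where [f,g] = fg − gf. -/

import Mathlib

open scoped TensorProduct

noncomputable section

variable (K V : Type*) [Field K] [AddCommGroup V] [Module K V]

/-- The deshuffling coproduct on the tensor algebra: the unique algebra morphism
sending `x : V` to `x ⊗ 1 + 1 ⊗ x`. -/
def deshuffle : TensorAlgebra K V →ₐ[K]
    TensorAlgebra K V ⊗[K] TensorAlgebra K V :=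
  TensorAlgebra.lift K
    (((TensorProduct.mk K (TensorAlgebra K V) (TensorAlgebra K V)).flip 1) ∘ₗ TensorAlgebra.ι K
      + (TensorProduct.mk K (TensorAlgebra K V) (TensorAlgebra K V) 1) ∘ₗ TensorAlgebra.ι K)

/-- The counit of the tensor algebra: the algebra morphism killing `V`. -/
def tensorCounit : TensorAlgebra K V →ₐ[K] K :=
  TensorAlgebra.lift K (0 : V →ₗ[K] K)

variable {K V}

/-- `star` is the canonical extension to `T(V)` of the magmatic product `m` on `V`:
(i) `f*1 = f`; (ii) `1*f = ε(f)1`; (iii) `x*(fy) = (x*f)*y − x*(f*y)`;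
(iv) `(fg)*h = Σ (f*h⁽¹⁾)(g*h⁽²⁾)`, and `star` restricted to `V` is `m`. -/
def IsMagExt (m : V →ₗ[K] V →ₗ[K] V)
    (star : TensorAlgebra K V →ₗ[K] TensorAlgebra K V →ₗ[K] TensorAlgebra K V) : Prop :=
  (∀ x y : V, star (TensorAlgebra.ι K x) (TensorAlgebra.ι K y) = TensorAlgebra.ι K (m x y)) ∧
  (∀ f, star f 1 = f) ∧
  (∀ f, star 1 f = (tensorCounit K V f) • 1) ∧
  (∀ (x : V) (f : TensorAlgebra K V) (y : V),
    star (TensorAlgebra.ι K x) (f * TensorAlgebra.ι K y)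
      = star (star (TensorAlgebra.ι K x) f) (TensorAlgebra.ι K y)
        - star (TensorAlgebra.ι K x) (star f (TensorAlgebra.ι K y))) ∧
  (∀ f g h, star (f * g) h
      = LinearMap.mul' K (TensorAlgebra K V)
          (TensorProduct.map (star f) (star g) (deshuffle K V h)))

attribute [local instance 100] LieRing.ofAssociativeRing

/-!
For `y ∈ V` the map `D_y = (- * y)` is, by the axioms, a derivation of `T(V)` and a coderivation
of `Δ_⧢`; together these give `f * (g y) = (f * g) * y - f * (g * y)` for all `f, g`.
Since `Δ_⧢` is cocommutative, `[p, q] * g = Σ [p * g⁽¹⁾, q * g⁽²⁾]`, so "`p * g` lies in a given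
subspace for every `g`" passes from `p` and `q` to `[p, q]`. Together with `x * g ∈ V` for `x ∈ V`
(induction on the degree of `g`) this gives `Lie(V) * T(V) ⊆ Lie(V)`, and it propagates the identity
above from `y ∈ V` to every `p * g` with `p ∈ Lie(V)`: the cross terms `(p * u) * (q * v)` arising
at a bracket equal `p * (u (q * v)) + p * (u * (q * v))`. The post-Lie identities then follow by
expanding commutators.
-/

open TensorAlgebra (ι)

local notation "T" => TensorAlgebra K V
local notation "Δ" => deshuffle K V
local notation "ε" => tensorCounit K V
local notation "μ" => LinearMap.mul' K (TensorAlgebra K V)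
local notation "𝓛" => LieSubalgebra.lieSpan K (TensorAlgebra K V)
  (Set.range (TensorAlgebra.ι K : V →ₗ[K] TensorAlgebra K V))

theorem LinearMap.rTensor_add_lTensor_mul {R A : Type*} [CommSemiring R] [Semiring A]
    [Algebra R A] (D : A →ₗ[R] A) (hD : ∀ a b, D (a * b) = D a * b + a * D b) (s t : A ⊗[R] A) :
    (D.rTensor A + D.lTensor A) (s * t)
      = (D.rTensor A + D.lTensor A) s * t + s * (D.rTensor A + D.lTensor A) t := by
  induction s using TensorProduct.induction_on with
  | zero => simp
  | add s s' hs hs' => simp only [add_mul, map_add, hs, hs']; abel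
  | tmul a b =>
    induction t using TensorProduct.induction_on with
    | zero => simp
    | add t t' ht ht' => simp only [mul_add, map_add, ht, ht']; abel
    | tmul c d =>
      simp only [LinearMap.add_apply, LinearMap.rTensor_tmul, LinearMap.lTensor_tmul,
        Algebra.TensorProduct.tmul_mul_tmul, hD, add_mul, mul_add, TensorProduct.add_tmul,
        TensorProduct.tmul_add]
      abel

theorem deshuffle_ι (x : V) : Δ (ι K x) = ι K x ⊗ₜ[K] 1 + 1 ⊗ₜ[K] ι K x := by
  simp [deshuffle, TensorAlgebra.lift_ι_apply, TensorProduct.mk]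

theorem tensorCounit_ι (x : V) : ε (ι K x) = 0 := by
  simp [tensorCounit, TensorAlgebra.lift_ι_apply]

theorem comm_deshuffle (g : T) : TensorProduct.comm K T T (Δ g) = Δ g := by
  have : (Algebra.TensorProduct.comm K T T).toAlgHom.comp (deshuffle K V) = deshuffle K V := by
    ext x
    simp [deshuffle_ι, add_comm]
  exact AlgHom.congr_fun this g

variable (K V) in
def primitives : LieSubalgebra K T where
  carrier := {f | Δ f = f ⊗ₜ[K] 1 + 1 ⊗ₜ[K] f}
  zero_mem' := by simp
  add_mem' {a b} ha hb := by
    change Δ a = _ at ha; change Δ b = _ at hb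
    change Δ (a + b) = _
    rw [map_add, ha, hb, TensorProduct.add_tmul, TensorProduct.tmul_add]
    abel
  smul_mem' c a ha := by
    change Δ a = _ at ha
    change Δ (c • a) = _
    rw [map_smul, ha, smul_add, TensorProduct.smul_tmul', TensorProduct.tmul_smul]
  lie_mem' {a b} ha hb := by
    change Δ a = _ at ha; change Δ b = _ at hb
    change Δ (a * b - b * a) = (a * b - b * a) ⊗ₜ[K] 1 + 1 ⊗ₜ[K] (a * b - b * a)
    simp only [map_sub, map_mul, ha, hb, mul_add, add_mul, Algebra.TensorProduct.tmul_mul_tmul,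
      one_mul, mul_one, TensorProduct.sub_tmul, TensorProduct.tmul_sub]
    abel

theorem mem_primitives {f : T} : f ∈ primitives K V ↔ Δ f = f ⊗ₜ[K] 1 + 1 ⊗ₜ[K] f := Iff.rfl

theorem lieSpan_le_primitives : 𝓛 ≤ primitives K V := by
  rw [LieSubalgebra.lieSpan_le]
  rintro _ ⟨x, rfl⟩
  exact deshuffle_ι x

def starMulSubmodule (star : T →ₗ[K] T →ₗ[K] T) : Submodule K T where
  carrier := {p | ∀ f g, star f (g * p) = star (star f g) p - star f (star g p)}
  zero_mem' := by simp
  add_mem' {a b} ha hb f g := by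
    simp only [mul_add, map_add, ha f g, hb f g]
    abel
  smul_mem' c a ha f g := by
    simp only [mul_smul_comm, map_smul, ha f g, smul_sub]

theorem mem_starMulSubmodule {star : T →ₗ[K] T →ₗ[K] T} {p : T} :
    p ∈ starMulSubmodule star ↔
      ∀ f g, star f (g * p) = star (star f g) p - star f (star g p) := Iff.rfl

theorem star_lie_of_mem_starMulSubmodule {star : T →ₗ[K] T →ₗ[K] T} {g h : T}
    (hg : g ∈ starMulSubmodule star) (hh : h ∈ starMulSubmodule star) (f : T) :
    star f ⁅g, h⁆
      = star (star f g) h - star f (star g h) - star (star f h) g + star f (star h g) := by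
  rw [Ring.lie_def, map_sub, mem_starMulSubmodule.mp hh f g, mem_starMulSubmodule.mp hg f h]
  abel

theorem star_star_mem_starMulSubmodule {star : T →ₗ[K] T →ₗ[K] T} {a b : T}
    (ha : ∀ g, star a g ∈ starMulSubmodule star) (hb : b ∈ starMulSubmodule star) (u : T) :
    star (star a u) b ∈ starMulSubmodule star := by
  have : star (star a u) b = star a (u * b) + star a (star u b) := by
    rw [mem_starMulSubmodule.mp hb a u, sub_add_cancel]
  exact this ▸ add_mem (ha _) (ha _)

namespace IsMagExt

variable {m : V →ₗ[K] V →ₗ[K] V}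
  {star : TensorAlgebra K V →ₗ[K] TensorAlgebra K V →ₗ[K] TensorAlgebra K V}
  (hs : IsMagExt m star)
include hs

theorem star_ι_ι (x y : V) : star (ι K x) (ι K y) = ι K (m x y) := hs.1 x y

theorem star_one (f : T) : star f 1 = f := hs.2.1 f

theorem one_star (f : T) : star 1 f = ε f • 1 := hs.2.2.1 f

theorem ι_star_mul_ι (x : V) (f : T) (y : V) :
    star (ι K x) (f * ι K y) = star (star (ι K x) f) (ι K y) - star (ι K x) (star f (ι K y)) :=
  hs.2.2.2.1 x f y

theorem mul_star (f g h : T) : star (f * g) h = μ (TensorProduct.map (star f) (star g) (Δ h)) :=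
  hs.2.2.2.2 f g h

theorem mul_star_of_mem_primitives {h : T} (hh : h ∈ primitives K V) (f g : T) :
    star (f * g) h = star f h * g + f * star g h := by
  rw [hs.mul_star, mem_primitives.mp hh]
  simp [hs.star_one]

theorem lie_star_of_mem_primitives {h : T} (hh : h ∈ primitives K V) (f g : T) :
    star ⁅f, g⁆ h = ⁅star f h, g⁆ + ⁅f, star g h⁆ := by
  simp only [Ring.lie_def, map_sub, LinearMap.sub_apply, hs.mul_star_of_mem_primitives hh]
  abel

theorem mul_star_ι (f g : T) (y : V) :
    star (f * g) (ι K y) = star f (ι K y) * g + f * star g (ι K y) :=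
  hs.mul_star_of_mem_primitives (deshuffle_ι y) f g

theorem one_star_ι (y : V) : star 1 (ι K y) = 0 := by
  rw [hs.one_star, tensorCounit_ι, zero_smul]

theorem algebraMap_star_ι (r : K) (y : V) : star (algebraMap K T r) (ι K y) = 0 := by
  rw [Algebra.algebraMap_eq_smul_one, map_smul, LinearMap.smul_apply, hs.one_star_ι, smul_zero]

theorem tensorCounit_star_ι (f : T) (y : V) : ε (star f (ι K y)) = 0 := by
  induction f using TensorAlgebra.induction with
  | algebraMap r => rw [hs.algebraMap_star_ι, map_zero]
  | ι x => rw [hs.star_ι_ι, tensorCounit_ι]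
  | mul a b ha hb => simp [hs.mul_star_ι, ha, hb]
  | add a b ha hb => simp [ha, hb]

theorem star_ι_mem_pow {n : ℕ} {f : T} (hf : f ∈ LinearMap.range (ι K : V →ₗ[K] T) ^ n)
    (y : V) : star f (ι K y) ∈ LinearMap.range (ι K : V →ₗ[K] T) ^ n := by
  induction hf using Submodule.pow_induction_on_right' with
  | algebraMap r => rw [hs.algebraMap_star_ι]; exact zero_mem _
  | add a b i _ _ ha hb => rw [map_add, LinearMap.add_apply]; exact add_mem ha hb
  | mul_mem i a _ ha _ hz =>
    obtain ⟨z, rfl⟩ := hz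
    rw [hs.mul_star_ι, hs.star_ι_ι, pow_succ]
    exact add_mem (Submodule.mul_mem_mul ha ⟨z, rfl⟩) (Submodule.mul_mem_mul ‹_› ⟨m z y, rfl⟩)

theorem ι_star_mem_range_of_mem_pow (n : ℕ) :
    ∀ g ∈ LinearMap.range (ι K : V →ₗ[K] T) ^ n, ∀ x : V,
      star (ι K x) g ∈ LinearMap.range (ι K : V →ₗ[K] T) := by
  induction n with
  | zero =>
    intro g hg x
    obtain ⟨r, rfl⟩ := Submodule.mem_one.mp (pow_zero (M := Submodule K T) _ ▸ hg)
    rw [Algebra.algebraMap_eq_smul_one, map_smul, hs.star_one]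
    exact Submodule.smul_mem _ _ ⟨x, rfl⟩
  | succ n ih =>
    intro g hg x
    rw [pow_succ] at hg
    refine Submodule.mul_induction_on hg ?_ fun a b ha hb => by rw [map_add]; exact add_mem ha hb
    rintro a ha _ ⟨z, rfl⟩
    obtain ⟨w, hw⟩ := ih a ha x
    rw [hs.ι_star_mul_ι, ← hw, hs.star_ι_ι]
    exact sub_mem ⟨m w z, rfl⟩ (ih _ (hs.star_ι_mem_pow ha z) x)

theorem ι_star_mem_range (x : V) (g : T) : star (ι K x) g ∈ LinearMap.range (ι K : V →ₗ[K] T) := by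
  induction g using DirectSum.Decomposition.inductionOn
    (fun n : ℕ => LinearMap.range (ι K : V →ₗ[K] T) ^ n) with
  | zero => rw [map_zero]; exact zero_mem _
  | add g g' hg hg' => rw [map_add]; exact add_mem hg hg'
  | homogeneous g => exact hs.ι_star_mem_range_of_mem_pow _ g g.2 x

theorem lie_star_mem {N : Submodule K T} {p q : T} (hN : ∀ u v, ⁅star p u, star q v⁆ ∈ N)
    (g : T) : star ⁅p, q⁆ g ∈ N := by
  let Ψ : T ⊗[K] T →ₗ[K] T := μ ∘ₗ TensorProduct.map (star p) (star q)
    - μ ∘ₗ TensorProduct.map (star q) (star p) ∘ₗ (TensorProduct.comm K T T).toLinearMap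
  have hΨ (t : T ⊗[K] T) : Ψ t ∈ N := by
    induction t using TensorProduct.induction_on with
    | zero => rw [map_zero]; exact zero_mem N
    | tmul u v => simpa [Ψ, Ring.lie_def] using hN u v
    | add s t hs_mem ht_mem => rw [map_add]; exact add_mem hs_mem ht_mem
  have hΨg : star ⁅p, q⁆ g = Ψ (Δ g) := by
    simp [Ψ, Ring.lie_def, hs.mul_star, comm_deshuffle]
  exact hΨg ▸ hΨ (Δ g)

theorem star_mem_lieSpan {p : T} (hp : p ∈ 𝓛) (g : T) : star p g ∈ 𝓛 := by
  induction hp using LieSubalgebra.lieSpan_induction generalizing g with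
  | mem _ hx =>
    obtain ⟨x, rfl⟩ := hx
    obtain ⟨w, hw⟩ := hs.ι_star_mem_range x g
    exact hw ▸ LieSubalgebra.subset_lieSpan ⟨w, rfl⟩
  | zero => simp
  | add a b _ _ ha hb => rw [map_add, LinearMap.add_apply]; exact add_mem (ha g) (hb g)
  | smul c a _ ha => rw [map_smul, LinearMap.smul_apply]; exact SMulMemClass.smul_mem c (ha g)
  | lie a b _ _ ha hb =>
    exact hs.lie_star_mem (N := (𝓛).toSubmodule)
      (fun u v => LieSubalgebra.lie_mem _ (ha u) (hb v)) g

theorem deshuffle_star_ι (f : T) (y : V) :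
    Δ (star f (ι K y))
      = ((star.flip (ι K y)).rTensor T + (star.flip (ι K y)).lTensor T) (Δ f) := by
  induction f using TensorAlgebra.induction with
  | algebraMap r =>
    simp [Algebra.algebraMap_eq_smul_one, Algebra.TensorProduct.one_def, hs.one_star_ι]
  | ι x => simp [hs.star_ι_ι, deshuffle_ι, hs.one_star_ι]
  | mul a b ha hb =>
    rw [hs.mul_star_ι, map_add, map_mul, map_mul, ha, hb, map_mul,
      LinearMap.rTensor_add_lTensor_mul _ (hs.mul_star_ι · · y)]
  | add a b ha hb => simp only [map_add, LinearMap.add_apply, ha, hb]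

theorem ι_mem_starMulSubmodule (y : V) : ι K y ∈ starMulSubmodule star := by
  intro f h
  induction f using TensorAlgebra.induction generalizing h with
  | algebraMap r =>
    simp [Algebra.algebraMap_eq_smul_one, hs.one_star, tensorCounit_ι, hs.tensorCounit_star_ι]
  | ι x => exact hs.ι_star_mul_ι x h y
  | add a b ha hb => simp only [map_add, LinearMap.add_apply, ha, hb]; abel
  | mul u v hu hv =>
    set D := star.flip (ι K y)
    have key (t : T ⊗[K] T) :
        μ (TensorProduct.map (star u) (star v) (t * Δ (ι K y)))
          = D (μ (TensorProduct.map (star u) (star v) t))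
            - μ (TensorProduct.map (star u) (star v) ((D.rTensor T + D.lTensor T) t)) := by
      induction t using TensorProduct.induction_on with
      | zero => simp
      | tmul a b =>
        simp only [deshuffle_ι, mul_add, Algebra.TensorProduct.tmul_mul_tmul, mul_one, map_add,
          TensorProduct.map_tmul, LinearMap.mul'_apply, LinearMap.add_apply,
          LinearMap.rTensor_tmul, LinearMap.lTensor_tmul, D, LinearMap.flip_apply, hu, hv,
          hs.mul_star_ι, sub_mul, mul_sub]
        abel
      | add t t' ht ht' => simp only [add_mul, map_add, ht, ht']; abel
    calc star (u * v) (h * ι K y)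
        = μ (TensorProduct.map (star u) (star v) (Δ h * Δ (ι K y))) := by
          rw [hs.mul_star, map_mul]
      _ = star (star (u * v) h) (ι K y) - star (u * v) (star h (ι K y)) := by
          rw [key, hs.mul_star, hs.mul_star, hs.deshuffle_star_ι]
          rfl

theorem lie_mem_starMulSubmodule {p q : T}
    (hp : p ∈ starMulSubmodule star) (hq : q ∈ starMulSubmodule star)
    (hpq : star p q ∈ starMulSubmodule star) (hqp : star q p ∈ starMulSubmodule star)
    (hp_prim : p ∈ primitives K V) (hq_prim : q ∈ primitives K V) :
    ⁅p, q⁆ ∈ starMulSubmodule star := by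
  intro f g
  have expand (A : T) := star_lie_of_mem_starMulSubmodule hp hq A
  rw [mem_starMulSubmodule] at hp hq hpq hqp
  have E1 : star f (g * p * q) = star (star (star f g) p) q - star (star f (star g p)) q
      - star (star f (star g q)) p + star f (star (star g q) p)
      - star (star f g) (star p q) + star f (star g (star p q)) := by
    rw [hq f (g * p), hp f g, hs.mul_star_of_mem_primitives hq_prim g p, map_sub,
      LinearMap.sub_apply, map_add, hp f (star g q), hpq f g]
    abel
  have E2 : star f (g * q * p) = star (star (star f g) q) p - star (star f (star g q)) p
      - star (star f (star g p)) q + star f (star (star g p) q)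
      - star (star f g) (star q p) + star f (star g (star q p)) := by
    rw [hp f (g * q), hq f g, hs.mul_star_of_mem_primitives hp_prim g q, map_sub,
      LinearMap.sub_apply, map_add, hq f (star g p), hqp f g]
    abel
  calc star f (g * ⁅p, q⁆) = star f (g * p * q) - star f (g * q * p) := by
        rw [Ring.lie_def, mul_sub, map_sub, ← mul_assoc, ← mul_assoc]
    _ = star (star f g) ⁅p, q⁆ - star f (star g ⁅p, q⁆) := by
        rw [E1, E2, expand (star f g), expand g]
        simp only [map_sub, map_add]
        abel

theorem star_mem_starMulSubmodule {p : T} (hp : p ∈ 𝓛) (g : T) :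
    star p g ∈ starMulSubmodule star := by
  induction hp using LieSubalgebra.lieSpan_induction generalizing g with
  | mem _ hx =>
    obtain ⟨x, rfl⟩ := hx
    obtain ⟨w, hw⟩ := hs.ι_star_mem_range x g
    exact hw ▸ hs.ι_mem_starMulSubmodule w
  | zero => simp
  | add a b _ _ ha hb => rw [map_add, LinearMap.add_apply]; exact add_mem (ha g) (hb g)
  | smul c a _ ha => rw [map_smul, LinearMap.smul_apply]; exact Submodule.smul_mem _ c (ha g)
  | lie a b ha hb iha ihb =>
    refine hs.lie_star_mem (fun u v => hs.lie_mem_starMulSubmodule (iha u) (ihb v)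
      (star_star_mem_starMulSubmodule iha (ihb v) u) (star_star_mem_starMulSubmodule ihb (iha u) v)
      (lieSpan_le_primitives (hs.star_mem_lieSpan ha u))
      (lieSpan_le_primitives (hs.star_mem_lieSpan hb v))) g

end IsMagExt

/-- the free Lie algebra `Lie(V) ⊆ T(V)` (the Lie subalgebra
generated by `V` for the commutator) satisfies `Lie(V)*T(V) ⊆ Lie(V)`, and
`(Lie(V), [−,−], *)` is a post-Lie algebra. -/
theorem lieSpan_post_lie (m : V →ₗ[K] V →ₗ[K] V)
    (star : TensorAlgebra K V →ₗ[K] TensorAlgebra K V →ₗ[K] TensorAlgebra K V)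
    (hstar : IsMagExt m star) :
    (∀ f ∈ LieSubalgebra.lieSpan K (TensorAlgebra K V)
        (Set.range (TensorAlgebra.ι K : V →ₗ[K] TensorAlgebra K V)),
      ∀ g : TensorAlgebra K V,
        star f g ∈ LieSubalgebra.lieSpan K (TensorAlgebra K V)
          (Set.range (TensorAlgebra.ι K : V →ₗ[K] TensorAlgebra K V))) ∧
    (∀ f g h : TensorAlgebra K V,
      f ∈ LieSubalgebra.lieSpan K (TensorAlgebra K V)
          (Set.range (TensorAlgebra.ι K : V →ₗ[K] TensorAlgebra K V)) →
      g ∈ LieSubalgebra.lieSpan K (TensorAlgebra K V)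
          (Set.range (TensorAlgebra.ι K : V →ₗ[K] TensorAlgebra K V)) →
      h ∈ LieSubalgebra.lieSpan K (TensorAlgebra K V)
          (Set.range (TensorAlgebra.ι K : V →ₗ[K] TensorAlgebra K V)) →
        star f ⁅g, h⁆
            = star (star f g) h - star f (star g h) - star (star f h) g + star f (star h g) ∧
        star ⁅f, g⁆ h = ⁅star f h, g⁆ + ⁅f, star g h⁆) := by
  have hN : ∀ f ∈ 𝓛, f ∈ starMulSubmodule star := fun f hf => by
    simpa [hstar.star_one] using hstar.star_mem_starMulSubmodule hf 1
  refine ⟨fun f hf g => hstar.star_mem_lieSpan hf g, fun f g h _ hg hh => ⟨?_, ?_⟩⟩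
  · exact star_lie_of_mem_starMulSubmodule (hN g hg) (hN h hh) f
  · exact hstar.lie_star_of_mem_primitives (lieSpan_le_primitives hh) f g

end
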